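/- arXiv:1510.08938 — 4 statements merged into one kernel-verified Lean document; each statement's English description precedes it below -/
import Mathlib

section
/- Let F(u,λ,α,β,γ) = -u³ - (λ+u)² + βu - γ(λ+u)u - α. At the point (u,λ,α,β,γ) = (1/3, 0, -1/27, -1/3, -2) the following hold: F = 0, ∂F/∂u = 0, ∂F/∂λ = 0, ∂²F/∂u² = 0, ∂²F/∂u∂λ = 0, while ∂³F/∂u³ = -6 ≠ 0 and ∂²F/∂λ² = -2 ≠ 0. (These are the defining derivative conditions for F to have a winged-cusp singularity at that point.) -/
/-- The homogeneous steady-state function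
`F(u,λ,α,β,γ) = -u³ - (λ+u)² + βu - γ(λ+u)u - α`. -/
noncomputable def Fss (u lam alp bet gam : ℝ) : ℝ :=
  -u ^ 3 - (lam + u) ^ 2 + bet * u - gam * (lam + u) * u - alp

section PartialDerivatives

variable (u lam alp bet gam : ℝ)

theorem hasDerivAt_Fss_u :
    HasDerivAt (fun u => Fss u lam alp bet gam)
      (-3 * u ^ 2 - 2 * (lam + u) + bet - gam * (lam + 2 * u)) u := by
  have hu := hasDerivAt_id' u
  have hsum := hu.const_add lam
  exact ((((hu.pow 3).neg.sub (hsum.pow 2)).add (hu.const_mul bet)).sub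
    ((hsum.const_mul gam).mul hu) |>.sub_const alp).congr_deriv (by push_cast; ring)

theorem deriv_Fss_u :
    deriv (fun u => Fss u lam alp bet gam) =
      fun u => -3 * u ^ 2 - 2 * (lam + u) + bet - gam * (lam + 2 * u) :=
  funext fun u => (hasDerivAt_Fss_u u lam alp bet gam).deriv

theorem deriv_deriv_Fss_u :
    deriv (deriv (fun u => Fss u lam alp bet gam)) = fun u => -6 * u - 2 - 2 * gam := by
  rw [deriv_Fss_u]
  ext u
  have hu := hasDerivAt_id' u
  exact ((((hu.pow 2).const_mul (-3)).sub ((hu.const_add lam).const_mul 2)).add_const bet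
    |>.sub ((hu.const_mul 2).const_add lam |>.const_mul gam)).deriv.trans (by push_cast; ring)

theorem deriv_deriv_deriv_Fss_u :
    deriv (deriv (deriv (fun u => Fss u lam alp bet gam))) = fun _ => -6 := by
  rw [deriv_deriv_Fss_u]
  ext u
  exact (((hasDerivAt_id' u).const_mul (-6)).sub_const 2 |>.sub_const (2 * gam)).deriv.trans
    (by ring)

theorem deriv_deriv_Fss_u_lam :
    deriv (fun lam => deriv (fun u => Fss u lam alp bet gam) u) = fun _ => -2 - gam := by
  simp_rw [deriv_Fss_u]
  ext lam
  have hl := hasDerivAt_id' lam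
  exact ((((hl.add_const u).const_mul 2).const_sub (-3 * u ^ 2)).add_const bet
    |>.sub ((hl.add_const (2 * u)).const_mul gam)).deriv.trans (by ring)

theorem hasDerivAt_Fss_lam :
    HasDerivAt (fun lam => Fss u lam alp bet gam) (-2 * (lam + u) - gam * u) lam := by
  have hsum := (hasDerivAt_id' lam).add_const u
  exact ((((hsum.pow 2).const_sub (-u ^ 3)).add_const (bet * u)).sub
    ((hsum.const_mul gam).mul_const u) |>.sub_const alp).congr_deriv (by push_cast; ring)

theorem deriv_Fss_lam :
    deriv (fun lam => Fss u lam alp bet gam) = fun lam => -2 * (lam + u) - gam * u :=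
  funext fun lam => (hasDerivAt_Fss_lam u lam alp bet gam).deriv

theorem deriv_deriv_Fss_lam :
    deriv (deriv (fun lam => Fss u lam alp bet gam)) = fun _ => -2 := by
  rw [deriv_Fss_lam]
  ext lam
  exact (((hasDerivAt_id' lam).add_const u |>.const_mul (-2)).sub_const (gam * u)).deriv.trans
    (by ring)

end PartialDerivatives

/-- At `(u,λ,α,β,γ) = (1/3, 0, -1/27, -1/3, -2)` the function `F` satisfies the
defining derivative conditions of a winged-cusp singularity:
`F = F_u = F_λ = F_uu = F_uλ = 0`, `F_uuu = -6 ≠ 0`, `F_λλ = -2 ≠ 0`. -/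
theorem wingedCusp_singularity_of_homogeneous_steady_state :
    Fss (1/3) 0 (-1/27) (-1/3) (-2) = 0 ∧
    deriv (fun u => Fss u 0 (-1/27) (-1/3) (-2)) (1/3) = 0 ∧
    deriv (fun lam => Fss (1/3) lam (-1/27) (-1/3) (-2)) 0 = 0 ∧
    deriv (deriv (fun u => Fss u 0 (-1/27) (-1/3) (-2))) (1/3) = 0 ∧
    deriv (fun lam => deriv (fun u => Fss u lam (-1/27) (-1/3) (-2)) (1/3)) 0 = 0 ∧
    deriv (deriv (deriv (fun u => Fss u 0 (-1/27) (-1/3) (-2)))) (1/3) = -6 ∧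
    (-6 : ℝ) ≠ 0 ∧
    deriv (deriv (fun lam => Fss (1/3) lam (-1/27) (-1/3) (-2))) 0 = -2 ∧
    (-2 : ℝ) ≠ 0 := by
  rw [deriv_deriv_deriv_Fss_u, deriv_deriv_Fss_u, deriv_deriv_Fss_u_lam, deriv_deriv_Fss_lam,
    deriv_Fss_u, deriv_Fss_lam]
  norm_num [Fss]
end

section
/- Let F(u,λ,α,β) = -u³ - (λ+u)² + βu - α (the homogeneous steady-state function with γ = 0). At the point (u,λ,α,β) = (-1/3, 1/3, -2/27, 1/3) the following hold: F = 0, ∂F/∂u = 0, ∂F/∂λ = 0, ∂²F/∂u² = 0, while ∂²F/∂u∂λ = -2 ≠ 0 and ∂³F/∂u³ = -6 ≠ 0. (These are the defining derivative conditions for F to have a pitchfork singularity at that point.) -/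
/-- The homogeneous steady-state function with `γ = 0`:
`F(u,λ,α,β) = -u³ - (λ+u)² + βu - α`. -/
noncomputable def Fss0 (u lam alp bet : ℝ) : ℝ :=
  -u ^ 3 - (lam + u) ^ 2 + bet * u - alp

section PartialDerivatives

variable (u lam alp bet : ℝ)

theorem hasDerivAt_Fss0_fst :
    HasDerivAt (fun u => Fss0 u lam alp bet) (-3 * u ^ 2 - 2 * (lam + u) + bet) u :=
  ((((hasDerivAt_pow 3 u).neg.sub (((hasDerivAt_id' u).const_add lam).pow 2)).add
    ((hasDerivAt_id' u).const_mul bet)).sub_const alp).congr_deriv (by norm_num)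

theorem hasDerivAt_Fss0_snd :
    HasDerivAt (fun lam => Fss0 u lam alp bet) (-2 * (lam + u)) lam :=
  ((((((hasDerivAt_id' lam).add_const u).pow 2).const_sub (-u ^ 3)).add_const (bet * u)).sub_const
    alp).congr_deriv (by norm_num)

theorem deriv_Fss0_fst :
    deriv (fun u => Fss0 u lam alp bet) = fun u => -3 * u ^ 2 - 2 * (lam + u) + bet :=
  funext fun u => (hasDerivAt_Fss0_fst u lam alp bet).deriv

theorem deriv_deriv_Fss0_fst :
    deriv (deriv fun u => Fss0 u lam alp bet) = fun u => -6 * u - 2 := by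
  rw [deriv_Fss0_fst]
  exact funext fun u => ((((hasDerivAt_pow 2 u).const_mul (-3)).sub
    (((hasDerivAt_id' u).const_add lam).const_mul 2)).add_const bet).congr_deriv
    (by norm_num; ring) |>.deriv

theorem deriv_deriv_deriv_Fss0_fst :
    deriv (deriv (deriv fun u => Fss0 u lam alp bet)) = fun _ => -6 := by
  rw [deriv_deriv_Fss0_fst]
  exact funext fun u =>
    (((hasDerivAt_id' u).const_mul (-6)).sub_const 2).congr_deriv (by ring) |>.deriv

theorem deriv_snd_deriv_Fss0_fst :
    deriv (fun lam => deriv (fun u => Fss0 u lam alp bet) u) lam = -2 := by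
  simp only [deriv_Fss0_fst]
  exact ((((hasDerivAt_id' lam).add_const u).const_mul 2).const_sub (-3 * u ^ 2)).add_const
    bet |>.congr_deriv (by ring) |>.deriv

end PartialDerivatives

/-- At `(u,λ,α,β) = (-1/3, 1/3, -2/27, 1/3)` the function `F` satisfies the
defining derivative conditions of a pitchfork singularity:
`F = F_u = F_λ = F_uu = 0`, `F_uλ = -2 ≠ 0`, `F_uuu = -6 ≠ 0`. -/
theorem pitchfork_singularity_of_homogeneous_steady_state :
    Fss0 (-1/3) (1/3) (-2/27) (1/3) = 0 ∧
    deriv (fun u => Fss0 u (1/3) (-2/27) (1/3)) (-1/3) = 0 ∧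
    deriv (fun lam => Fss0 (-1/3) lam (-2/27) (1/3)) (1/3) = 0 ∧
    deriv (deriv (fun u => Fss0 u (1/3) (-2/27) (1/3))) (-1/3) = 0 ∧
    deriv (fun lam => deriv (fun u => Fss0 u lam (-2/27) (1/3)) (-1/3)) (1/3) = -2 ∧
    (-2 : ℝ) ≠ 0 ∧
    deriv (deriv (deriv (fun u => Fss0 u (1/3) (-2/27) (1/3)))) (-1/3) = -6 ∧
    (-6 : ℝ) ≠ 0 := by
  refine ⟨?_, ?_, ?_, ?_, deriv_snd_deriv_Fss0_fst _ _ _ _, by norm_num, ?_, by norm_num⟩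
  · norm_num [Fss0]
  · norm_num [deriv_Fss0_fst]
  · norm_num [(hasDerivAt_Fss0_snd _ _ _ _).deriv]
  · norm_num [deriv_deriv_Fss0_fst]
  · rw [deriv_deriv_deriv_Fss0_fst]
end

section
/- For every ε > 0 there exist λ < 1/3 and α < -2/27 with |λ - 1/3| < ε and |α + 2/27| < ε such that, with β = 1/3 and γ = 0: (i) the cubic u ↦ F(u) = -u³ - (λ+u)² + u/3 - α has exactly three real roots u_rest < u_o < u_right; (ii) u_rest satisfies u_rest³ - u_rest/3 - α > -u_rest³ + u_rest/3 - α > 0 and u_rest³ - (4/3)·u_rest + α > 0; (iii) the cubic u ↦ -u³ + u/3 - (λ + u_rest)² - α has three distinct real roots r₁ < r₂ < r₃ with r₁ = u_rest and r₂ - r₁ < r₃ - r₂. -/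
/-- Lemma A.1(a)-(c) algebraic conditions: arbitrarily close to the pitchfork
values `(λ, α) = (1/3, -2/27)` (with `β = 1/3`, `γ = 0`) there are parameters
`λ < 1/3`, `α < -2/27` for which (i) the homogeneous steady-state cubic
`F(u) = -u³ - (λ+u)² + u/3 - α` has exactly three real roots
`u_rest < u_o < u_right`; (ii) `u_rest` satisfies the stated inequalities; and
(iii) the layer cubic at the slice `w = u_rest` has three distinct roots
`r₁ < r₂ < r₃` with `r₁ = u_rest` and `r₂ - r₁ < r₃ - r₂`. -/
theorem lemma_A1_algebraic_conditions :
    ∀ ε > (0 : ℝ), ∃ lam alp : ℝ,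
      lam < 1/3 ∧ alp < -2/27 ∧ |lam - 1/3| < ε ∧ |alp + 2/27| < ε ∧
      ∃ urest uo uright : ℝ,
        urest < uo ∧ uo < uright ∧
        (∀ u : ℝ, -u ^ 3 - (lam + u) ^ 2 + u / 3 - alp = 0 ↔
          (u = urest ∨ u = uo ∨ u = uright)) ∧
        urest ^ 3 - urest / 3 - alp > -urest ^ 3 + urest / 3 - alp ∧
        -urest ^ 3 + urest / 3 - alp > 0 ∧
        urest ^ 3 - (4/3) * urest + alp > 0 ∧
        ∃ r₁ r₂ r₃ : ℝ,
          r₁ < r₂ ∧ r₂ < r₃ ∧ r₁ = urest ∧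
          (∀ u : ℝ, -u ^ 3 + u / 3 - (lam + urest) ^ 2 - alp = 0 ↔
            (u = r₁ ∨ u = r₂ ∨ u = r₃)) ∧
          r₂ - r₁ < r₃ - r₂ := by
  intro ε hε
  set t : ℝ := min ε (1/10) with ht_def
  have ht0 : 0 < t := lt_min hε (by norm_num)
  have ht1 : t ≤ 1/10 := min_le_right _ _
  have hte : t ≤ ε := min_le_left _ _
  have h2 : t^2 ≤ t/10 := by nlinarith
  have h4 : t^4 ≤ t/1000 := by nlinarith [sq_nonneg t, sq_nonneg (t^2)]
  have h2p : 0 < t^2 := by positivity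
  have h4p : 0 < t^4 := by positivity
  refine ⟨1/3 - t^2/2, -2/27 - t^4/4, by linarith, by linarith, ?_, ?_, ?_⟩
  · rw [abs_lt]; constructor <;> linarith
  · rw [abs_lt]; constructor <;> linarith
  have hD : (0:ℝ) < 1 - 2*t - 3*t^2 := by nlinarith
  set s := Real.sqrt (1 - 2*t - 3*t^2) with hs_def
  have hs2 : s^2 = 1 - 2*t - 3*t^2 := Real.sq_sqrt hD.le
  have hs0 : 0 < s := Real.sqrt_pos.mpr hD
  have hsl : 1/3 + t < s := by nlinarith
  have hsu : s < 1 + 3*t := by nlinarith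
  refine ⟨-1/3 - t, -1/3, -1/3 + t, by linarith, by linarith, ?_, by nlinarith,
    by nlinarith, by nlinarith, -1/3 - t, ((1/3 + t) - s)/2, ((1/3 + t) + s)/2,
    by linarith, by linarith, rfl, ?_, by linarith⟩
  · intro u
    have key : -u^3 - ((1/3 - t^2/2) + u)^2 + u/3 - (-2/27 - t^4/4)
        = -((u - (-1/3 - t)) * ((u - (-1/3)) * (u - (-1/3 + t)))) := by ring
    rw [key, neg_eq_zero, mul_eq_zero, mul_eq_zero, sub_eq_zero, sub_eq_zero,
      sub_eq_zero]
  · intro u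
    have key2 : -u^3 + u/3 - ((1/3 - t^2/2) + (-1/3 - t))^2 - (-2/27 - t^4/4)
        = -((u - (-1/3 - t)) * ((u - ((1/3 + t) - s)/2) * (u - ((1/3 + t) + s)/2))) := by
      linear_combination (-(u - (-1/3 - t))/4) * hs2
    rw [key2, neg_eq_zero, mul_eq_zero, mul_eq_zero, sub_eq_zero, sub_eq_zero,
      sub_eq_zero]
end

section
/- Let β > 0, α̃ = -2(β/3)^{3/2}, and λ̃ = √2·(β/3)^{3/4} or λ̃ = -√2·(β/3)^{3/4} (equivalently, λ̃² = -α̃). Then -g_wcusp(u, λ̃, α̃, β, 0) = u³ - βu for all u, and the functions u₊(t) = √β·tanh(√(β/2)·t) and u₋(t) = -√β·tanh(√(β/2)·t) satisfy u''(t) = -g_wcusp(u(t), λ̃, α̃, β, 0) for all t, with (u₊(t), u₊'(t)) → (√β, 0) as t → +∞ and → (-√β, 0) as t → -∞, and symmetrically for u₋. Hence at each of these two values of λ̃ the standing layer dynamics u' = v, v' = -g_wcusp(u, λ̃, α̃, β, 0) possesses both an upward and a downward heteroclinic front connecting the equilibria (-√β, 0) and (√β, 0). -/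
/-!
At `λ̃² = -α̃` the constant part `-λ̃² - α̃` of the winged cusp vanishes, so the standing layer
equation becomes the cubic `u'' = u³ - βu`. Its classical kink `A tanh(c t)` solves this equation
as soon as `A² = 2c² = β`, since `tanh' = 1 - tanh²`; and because `tanh → ±1` at `±∞`, the kink
and its derivative tend to `(±A, 0)`. Taking `A = ±√β` gives the upward and downward fronts.
-/

open Real Filter

/-- The winged-cusp unfolding `g_wcusp(u,λ,α,β,γ) = -u³ - λ² - α + βu + γuλ`. -/
noncomputable def gwcusp (u lam alp bet gam : ℝ) : ℝ :=
  -u ^ 3 - lam ^ 2 - alp + bet * u + gam * u * lam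

namespace Real

theorem hasDerivAt_tanh (x : ℝ) : HasDerivAt tanh (1 - tanh x ^ 2) x := by
  have h : HasDerivAt (fun y => sinh y / cosh y) _ x :=
    (hasDerivAt_sinh x).div (hasDerivAt_cosh x) (cosh_pos x).ne'
  convert h using 1
  · exact funext tanh_eq_sinh_div_cosh
  · rw [tanh_eq_sinh_div_cosh]
    field_simp

theorem tanh_eq_one_sub_two_div (x : ℝ) : tanh x = 1 - 2 / (exp (2 * x) + 1) := by
  rw [tanh_eq_sinh_div_cosh, sinh_eq, cosh_eq, exp_neg, two_mul, exp_add]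
  have : exp x ≠ 0 := (exp_pos x).ne'
  field_simp
  ring

theorem tendsto_tanh_atTop : Tendsto tanh atTop (nhds 1) := by
  have hden : Tendsto (fun x : ℝ => exp (2 * x) + 1) atTop atTop :=
    tendsto_atTop_add_const_right _ 1
      (tendsto_exp_atTop.comp (tendsto_id.const_mul_atTop two_pos))
  have h := (tendsto_const_nhds (x := (1 : ℝ))).sub
    ((tendsto_const_nhds (x := (2 : ℝ))).div_atTop hden)
  rw [sub_zero] at h
  exact h.congr fun x => (tanh_eq_one_sub_two_div x).symm

theorem tendsto_tanh_atBot : Tendsto tanh atBot (nhds (-1)) := by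
  have h := (tendsto_tanh_atTop.comp tendsto_neg_atBot_atTop).neg
  refine h.congr fun x => ?_
  simp [tanh_neg]

end Real

section Kink

variable (A c : ℝ)

theorem deriv_const_mul_tanh_mul :
    deriv (fun t => A * tanh (c * t)) = fun t => A * c * (1 - tanh (c * t) ^ 2) := by
  funext t
  have h := ((hasDerivAt_tanh (c * t)).comp t ((hasDerivAt_id t).const_mul c)).const_mul A
  exact (h.congr_deriv (by simp only [mul_one]; ring)).deriv

theorem deriv_deriv_const_mul_tanh_mul (t : ℝ) :
    deriv (deriv fun t => A * tanh (c * t)) t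
      = -2 * A * c ^ 2 * tanh (c * t) * (1 - tanh (c * t) ^ 2) := by
  rw [deriv_const_mul_tanh_mul]
  have hT := (hasDerivAt_tanh (c * t)).comp t ((hasDerivAt_id t).const_mul c)
  have h := ((hT.pow 2).const_sub 1).const_mul (A * c)
  exact (h.congr_deriv (by simp only [Function.comp_apply, mul_one, Nat.cast_ofNat]; ring)).deriv

theorem deriv_deriv_kink_eq_cubic {b : ℝ} (hA : A ^ 2 = b) (hc : 2 * c ^ 2 = b) (t : ℝ) :
    deriv (deriv fun t => A * tanh (c * t)) t
      = (A * tanh (c * t)) ^ 3 - b * (A * tanh (c * t)) := by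
  rw [deriv_deriv_const_mul_tanh_mul]
  linear_combination (tanh (c * t) ^ 3 * A - tanh (c * t) * A) * hc - (tanh (c * t) ^ 3 * A) * hA

theorem tendsto_kink_of_tendsto_tanh {l : Filter ℝ} {L : ℝ}
    (h : Tendsto (fun t => tanh (c * t)) l (nhds L)) (hL : L ^ 2 = 1) :
    Tendsto (fun t => (A * tanh (c * t), deriv (fun t => A * tanh (c * t)) t)) l
      (nhds (A * L, 0)) := by
  rw [deriv_const_mul_tanh_mul]
  have hderiv := ((tendsto_const_nhds (x := (1 : ℝ))).sub (h.pow 2)).const_mul (A * c)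
  rw [hL, sub_self, mul_zero] at hderiv
  exact (h.const_mul A).prodMk_nhds hderiv

variable {c}

theorem tendsto_kink_atTop (hc : 0 < c) :
    Tendsto (fun t => (A * tanh (c * t), deriv (fun t => A * tanh (c * t)) t)) atTop
      (nhds (A, 0)) := by
  simpa using tendsto_kink_of_tendsto_tanh A c
    (tendsto_tanh_atTop.comp (tendsto_id.const_mul_atTop hc)) (one_pow 2)

theorem tendsto_kink_atBot (hc : 0 < c) :
    Tendsto (fun t => (A * tanh (c * t), deriv (fun t => A * tanh (c * t)) t)) atBot
      (nhds (-A, 0)) := by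
  simpa using tendsto_kink_of_tendsto_tanh A c
    (tendsto_tanh_atBot.comp (tendsto_id.const_mul_atBot hc)) (by norm_num)

end Kink

theorem neg_gwcusp_zero_of_sq_add_eq_zero {lam alp : ℝ} (h : lam ^ 2 + alp = 0) (u bet : ℝ) :
    -gwcusp u lam alp bet 0 = u ^ 3 - bet * u := by
  unfold gwcusp
  linear_combination h

theorem sq_add_eq_zero_of_special_level {bet alp lam : ℝ} (hbet : 0 ≤ bet)
    (halp : alp = -2 * (bet / 3) ^ ((3 : ℝ) / 2))
    (hlam : lam = √2 * (bet / 3) ^ ((3 : ℝ) / 4) ∨ lam = -(√2 * (bet / 3) ^ ((3 : ℝ) / 4))) :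
    lam ^ 2 + alp = 0 := by
  have hpow : ((bet / 3) ^ ((3 : ℝ) / 4)) ^ 2 = (bet / 3) ^ ((3 : ℝ) / 2) := by
    rw [← rpow_mul_natCast (by positivity)]
    norm_num
  have hlam_sq : lam ^ 2 = 2 * (bet / 3) ^ ((3 : ℝ) / 2) := by
    rcases hlam with rfl | rfl <;> simp only [neg_sq, mul_pow, sq_sqrt zero_le_two, hpow]
  rw [halp, hlam_sq]
  ring

/-- Standing fronts at the two special bifurcation values: for `β > 0`,
`α̃ = -2(β/3)^(3/2)` and `λ̃ = ±√2 (β/3)^(3/4)` (so that `λ̃² = -α̃`), the layer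
nonlinearity satisfies `-g_wcusp(u, λ̃, α̃, β, 0) = u³ - βu`, and the explicit
profiles `u₊(t) = √β tanh(√(β/2) t)`, `u₋ = -u₊` are heteroclinic fronts of the
standing layer dynamics connecting `(-√β, 0)` and `(√β, 0)`. -/
theorem standing_fronts_at_special_levels
    (bet alpt lamt : ℝ) (hbet : 0 < bet)
    (halpt : alpt = -2 * (bet / 3) ^ ((3 : ℝ) / 2))
    (hlamt : lamt = Real.sqrt 2 * (bet / 3) ^ ((3 : ℝ) / 4) ∨
             lamt = -(Real.sqrt 2 * (bet / 3) ^ ((3 : ℝ) / 4))) :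
    (∀ u : ℝ, -gwcusp u lamt alpt bet 0 = u ^ 3 - bet * u) ∧
    (let up : ℝ → ℝ := fun t => Real.sqrt bet * Real.tanh (Real.sqrt (bet / 2) * t)
     let um : ℝ → ℝ := fun t => -(Real.sqrt bet * Real.tanh (Real.sqrt (bet / 2) * t))
     (∀ t : ℝ, deriv (deriv up) t = -gwcusp (up t) lamt alpt bet 0) ∧
     Tendsto (fun t => (up t, deriv up t)) atTop (nhds (Real.sqrt bet, 0)) ∧
     Tendsto (fun t => (up t, deriv up t)) atBot (nhds (-Real.sqrt bet, 0)) ∧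
     (∀ t : ℝ, deriv (deriv um) t = -gwcusp (um t) lamt alpt bet 0) ∧
     Tendsto (fun t => (um t, deriv um t)) atTop (nhds (-Real.sqrt bet, 0)) ∧
     Tendsto (fun t => (um t, deriv um t)) atBot (nhds (Real.sqrt bet, 0))) := by
  have hg (u : ℝ) : -gwcusp u lamt alpt bet 0 = u ^ 3 - bet * u :=
    neg_gwcusp_zero_of_sq_add_eq_zero (sq_add_eq_zero_of_special_level hbet.le halpt hlamt) u bet
  have hc : 0 < √(bet / 2) := sqrt_pos.mpr (by positivity)
  have hc_sq : 2 * √(bet / 2) ^ 2 = bet := by rw [sq_sqrt (by positivity)]; ring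
  have hA_sq : √bet ^ 2 = bet := sq_sqrt hbet.le
  refine ⟨hg, ?_⟩
  intro up um
  simp only [up, um, hg, ← neg_mul]
  refine ⟨deriv_deriv_kink_eq_cubic _ _ hA_sq hc_sq, tendsto_kink_atTop _ hc,
    tendsto_kink_atBot _ hc, deriv_deriv_kink_eq_cubic _ _ (by rwa [neg_sq]) hc_sq,
    tendsto_kink_atTop _ hc, ?_⟩
  simpa using tendsto_kink_atBot (-√bet) hc
end
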